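/- arXiv:2504.11141 — 2 statements merged into one kernel-verified Lean document; each statement's English description precedes it below -/
import Mathlib

section
/- Suppose the cost function c satisfies Assumption A, and define q : B × Y × ℝ → [0,∞) by q(s,y,σ) := max{0, inf{t ≥ 0 : c((s,t),y) ≥ σ}} (equivalently, q(s,y,σ) = (c((s,·),y))^{-1}(σ) if σ ≥ c((s,0),y) and q(s,y,σ) = 0 otherwise). Then for any compact interval U ⊂ ℝ, the family of functions { q(·,y,·) restricted to B × U : y ∈ Y } is uniformly bounded and equicontinuous. -/
open MeasureTheory Set Filter Topology

/-!
Compactness of `B × Y` and monotonicity give one height `T` at which every `c((s, ·), y)` exceeds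
the top of `U`, so `q ≤ T` there; continuity and strict monotonicity on the compact set
`B × [0, T] × Y` give a uniform gain `m > 0` of `c` over every vertical step of length `δ`.
As `q(s, y, σ)` is the first height at which `c((s, ·), y)` reaches `σ`, changing `σ` by less
than `m / 2`, and `s` so little that `c` changes by less than `m / 2` (equicontinuity of `c` in
`s`), moves `q` by at most `δ`, uniformly in `y`.
-/

noncomputable section

/-- The ambient source space `ℝ^{d-1} × ℝ` (with `n = d - 1`). -/
abbrev ESrc (n : ℕ) := EuclideanSpace ℝ (Fin n) × ℝ

/-- The ambient target space `ℝ^d` (with `n = d - 1`). -/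
abbrev ETgt (n : ℕ) := EuclideanSpace ℝ (Fin (n + 1))

/-- Assumption A on the cost function `c : X × Y → [0,∞)`, where `X = B × [0,∞)`:
(nonnegativity,) local Lipschitz continuity, strict monotonicity and unboundedness in the
vertical variable, and equicontinuity in the horizontal variable. -/
structure AssumptionA {n : ℕ} (B : Set (EuclideanSpace ℝ (Fin n))) (Y : Set (ETgt n))
    (c : ESrc n → ETgt n → ℝ) : Prop where
  nonneg : ∀ x ∈ B ×ˢ Ici (0:ℝ), ∀ y ∈ Y, 0 ≤ c x y
  locLip : ∀ z ∈ (B ×ˢ Ici (0:ℝ)) ×ˢ Y, ∃ ε > 0, ∃ K : NNReal,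
    LipschitzOnWith K (fun q : ESrc n × ETgt n => c q.1 q.2)
      (((B ×ˢ Ici (0:ℝ)) ×ˢ Y) ∩ Metric.ball z ε)
  strictMonoOn : ∀ s ∈ B, ∀ y ∈ Y, StrictMonoOn (fun t : ℝ => c (s, t) y) (Ici (0:ℝ))
  unbounded : ∀ s ∈ B, ∀ y ∈ Y, ∀ M : ℝ, ∃ t : ℝ, 0 ≤ t ∧ M ≤ c (s, t) y
  equicontinuous : EquicontinuousOn
    (fun i : ↥(Ici (0:ℝ)) × ↥Y => fun s : EuclideanSpace ℝ (Fin n) =>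
      c (s, (i.1 : ℝ)) (i.2 : ETgt n)) B

/-- A probability density on `B` (an element of `P_ac(B)`, identified with its density). -/
structure IsDensity {n : ℕ} (B : Set (EuclideanSpace ℝ (Fin n)))
    (ρ : EuclideanSpace ℝ (Fin n) → ℝ) : Prop where
  measurable : Measurable ρ
  nonneg : ∀ s, 0 ≤ ρ s
  zero_outside : ∀ s ∉ B, ρ s = 0
  integral_one : ∫ s, ρ s = 1

/-- The region `X_{p̄} = {(s,t) : s ∈ B, 0 ≤ t ≤ p̄(s)}` under the graph of `ρ`. -/
def subgraph {n : ℕ} (B : Set (EuclideanSpace ℝ (Fin n)))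
    (ρ : EuclideanSpace ℝ (Fin n) → ℝ) : Set (ESrc n) :=
  {x : ESrc n | x.1 ∈ B ∧ 0 ≤ x.2 ∧ x.2 ≤ ρ x.1}

/-- The measure `μ_{p̄}`: Lebesgue measure restricted to `X_{p̄}`. -/
def muOf {n : ℕ} (B : Set (EuclideanSpace ℝ (Fin n)))
    (ρ : EuclideanSpace ℝ (Fin n) → ℝ) : Measure (ESrc n) :=
  volume.restrict (subgraph B ρ)

/-- `γ` is a coupling (transport plan) between `μ` and `ν`. -/
def IsCoupling {α β : Type*} [MeasurableSpace α] [MeasurableSpace β]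
    (μ : Measure α) (ν : Measure β) (γ : Measure (α × β)) : Prop :=
  γ.map Prod.fst = μ ∧ γ.map Prod.snd = ν

/-- The optimal transport (Kantorovich) cost `T_c(μ,ν)`. -/
def transportCost {α β : Type*} [MeasurableSpace α] [MeasurableSpace β]
    (c : α → β → ℝ) (μ : Measure α) (ν : Measure β) : ℝ :=
  sInf {r : ℝ | ∃ γ : Measure (α × β), IsCoupling μ ν γ ∧ r = ∫ z, c z.1 z.2 ∂γ}

/-- `γ` is an optimal transport plan from `μ` to `ν` for the cost `c`. -/
def IsOptimalPlan {α β : Type*} [MeasurableSpace α] [MeasurableSpace β]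
    (c : α → β → ℝ) (μ : Measure α) (ν : Measure β) (γ : Measure (α × β)) : Prop :=
  IsCoupling μ ν γ ∧ ∀ γ' : Measure (α × β), IsCoupling μ ν γ' →
    ∫ z, c z.1 z.2 ∂γ ≤ ∫ z, c z.1 z.2 ∂γ'

/-- `T` is an optimal transport map from `μ` to `ν` for the cost `c`. -/
def IsOptimalMap {α β : Type*} [MeasurableSpace α] [MeasurableSpace β]
    (c : α → β → ℝ) (μ : Measure α) (ν : Measure β) (T : α → β) : Prop :=
  Measurable T ∧ μ.map T = ν ∧ ∀ T' : α → β, Measurable T' → μ.map T' = ν →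
    ∫ x, c x (T x) ∂μ ≤ ∫ x, c x (T' x) ∂μ

/-- The `c`-transform `ψ^c(x) = min_{y ∈ Y} (c(x,y) - ψ(y))`. -/
def ctransform {α β : Type*} (c : α → β → ℝ) (Y : Set β) (ψ : β → ℝ) (x : α) : ℝ :=
  sInf ((fun y => c x y - ψ y) '' Y)

/-- The Kantorovich dual functional `K(ψ; μ, ν) = ∫ ψ^c dμ + ∫ ψ dν`. -/
def Kfun {α β : Type*} [MeasurableSpace α] [MeasurableSpace β]
    (c : α → β → ℝ) (Y : Set β) (ψ : β → ℝ) (μ : Measure α) (ν : Measure β) : ℝ :=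
  ∫ x, ctransform c Y ψ x ∂μ + ∫ y, ψ y ∂ν

/-- `ψ` is a Kantorovich potential from `μ` to `ν`: a continuous maximiser of the
Kantorovich dual functional over `C(Y)`. -/
def IsKantorovichPotential {α β : Type*} [MeasurableSpace α] [MeasurableSpace β]
    [TopologicalSpace β] (c : α → β → ℝ) (Y : Set β) (ψ : β → ℝ) (μ : Measure α) (ν : Measure β) : Prop :=
  ContinuousOn ψ Y ∧ ∀ φ : β → ℝ, ContinuousOn φ Y → Kfun c Y φ μ ν ≤ Kfun c Y ψ μ ν

/-- The primal functional `F_ν(p̄) = T_c(μ_{p̄}, ν)`. -/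
def Fprimal {n : ℕ} (c : ESrc n → ETgt n → ℝ) (B : Set (EuclideanSpace ℝ (Fin n)))
    (ν : Measure (ETgt n)) (ρ : EuclideanSpace ℝ (Fin n) → ℝ) : ℝ :=
  transportCost c (muOf B ρ) ν

/-- The dual functional `G_ν(ψ) = inf_{p̄ ∈ P_ac(B)} K(ψ; μ_{p̄}, ν)`. -/
def Gdual {n : ℕ} (c : ESrc n → ETgt n → ℝ) (B : Set (EuclideanSpace ℝ (Fin n)))
    (Y : Set (ETgt n)) (ν : Measure (ETgt n)) (ψ : ETgt n → ℝ) : ℝ :=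
  sInf {r : ℝ | ∃ ρ, IsDensity B ρ ∧ r = Kfun c Y ψ (muOf B ρ) ν}

/-- `q(s,y,σ) = max {0, inf {t ≥ 0 : c((s,t),y) ≥ σ}}`, the generalized inverse of
`t ↦ c((s,t),y)`. -/
def qfun {n : ℕ} (c : ESrc n → ETgt n → ℝ) (s : EuclideanSpace ℝ (Fin n))
    (y : ETgt n) (σ : ℝ) : ℝ :=
  max 0 (sInf {t : ℝ | 0 ≤ t ∧ σ ≤ c (s, t) y})

/-- The candidate optimal surface `p̄_ψ(s) = max_{y ∈ Y} q(s, y, ψ(y) + τ)`. -/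
def pbar {n : ℕ} (c : ESrc n → ETgt n → ℝ) (Y : Set (ETgt n)) (ψ : ETgt n → ℝ)
    (τ : ℝ) (s : EuclideanSpace ℝ (Fin n)) : ℝ :=
  sSup ((fun y => qfun c s y (ψ y + τ)) '' Y)

theorem IsCompact.exists_uniform_le_of_monotoneOn {X : Type*} [TopologicalSpace X] {K : Set X}
    (hK : IsCompact K) {g : ℝ → X → ℝ} (hcont : ∀ t, 0 ≤ t → ContinuousOn (g t) K)
    (hmono : ∀ x ∈ K, MonotoneOn (g · x) (Ici 0))
    (hunb : ∀ x ∈ K, ∀ M, ∃ t, 0 ≤ t ∧ M ≤ g t x) (u : ℝ) :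
    ∃ T, 0 ≤ T ∧ ∀ x ∈ K, u ≤ g T x := by
  have := isCompact_iff_compactSpace.mp hK
  have hcover : univ ⊆ ⋃ k : ℕ, {x : K | u < g k x} := by
    rintro x -
    obtain ⟨t, ht, hle⟩ := hunb x x.2 (u + 1)
    have : g t x ≤ g ⌈t⌉₊ x :=
      hmono x x.2 ht (mem_Ici.2 (Nat.cast_nonneg _)) (Nat.le_ceil t)
    exact mem_iUnion.2 ⟨⌈t⌉₊, show u < g ⌈t⌉₊ x by linarith⟩
  have hdir : Directed (· ⊆ ·) fun k : ℕ => {x : K | u < g k x} :=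
    Monotone.directed_le fun i j hij x hx =>
      hx.trans_le <| hmono x x.2 (mem_Ici.2 i.cast_nonneg) (mem_Ici.2 j.cast_nonneg)
        (Nat.cast_le.mpr hij)
  obtain ⟨k, hk⟩ := isCompact_univ.elim_directed_cover _
    (fun k : ℕ => isOpen_lt continuous_const (hcont k k.cast_nonneg).domRestrict) hcover hdir
  exact ⟨k, k.cast_nonneg, fun x hx => (hk (mem_univ ⟨x, hx⟩)).le⟩

section qfun

variable {n : ℕ} {c : ESrc n → ETgt n → ℝ} {s s' : EuclideanSpace ℝ (Fin n)} {y : ETgt n}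

theorem qfun_le {σ r : ℝ} (hr : 0 ≤ r) (h : σ ≤ c (s, r) y) : qfun c s y σ ≤ r :=
  max_le hr (csInf_le ⟨0, fun _ ht => ht.1⟩ ⟨hr, h⟩)

theorem le_c_qfun {σ r : ℝ} (hcont : ContinuousOn (fun t => c (s, t) y) (Ici 0)) (hr : 0 ≤ r)
    (h : σ ≤ c (s, r) y) : σ ≤ c (s, qfun c s y σ) y := by
  have hclosed : IsClosed {t : ℝ | 0 ≤ t ∧ σ ≤ c (s, t) y} :=
    hcont.preimage_isClosed_of_isClosed isClosed_Ici isClosed_Ici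
  have hmem := hclosed.csInf_mem ⟨r, hr, h⟩ ⟨0, fun _ ht => ht.1⟩
  rw [qfun, max_eq_right hmem.1]
  exact hmem.2

theorem qfun_le_add_of_dist_lt {σ σ' q δ m : ℝ} (hqδ : 0 ≤ q + δ) (hσ' : σ' ≤ c (s', q) y)
    (hstep : c (s', q) y + m ≤ c (s', q + δ) y) (hσ : σ < σ' + m / 2)
    (hnear : dist (c (s, q + δ) y) (c (s', q + δ) y) < m / 2) :
    qfun c s y σ ≤ q + δ := by
  rw [Real.dist_eq, abs_lt] at hnear
  exact qfun_le hqδ (by linarith)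

end qfun

namespace AssumptionA

variable {n : ℕ} {B : Set (EuclideanSpace ℝ (Fin n))} {Y : Set (ETgt n)}
  {c : ESrc n → ETgt n → ℝ}

theorem continuousOn (hc : AssumptionA B Y c) :
    ContinuousOn (fun p : ESrc n × ETgt n => c p.1 p.2) ((B ×ˢ Ici 0) ×ˢ Y) := by
  intro z hz
  obtain ⟨ε, hε, K, hK⟩ := hc.locLip z hz
  exact (continuousWithinAt_inter (Metric.ball_mem_nhds z hε)).mp
    (hK.continuousOn z ⟨hz, Metric.mem_ball_self hε⟩)

theorem continuousOn_height (hc : AssumptionA B Y c) {s : EuclideanSpace ℝ (Fin n)}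
    {y : ETgt n} (hs : s ∈ B) (hy : y ∈ Y) : ContinuousOn (fun t => c (s, t) y) (Ici 0) :=
  hc.continuousOn.comp (f := fun t : ℝ => ((s, t), y)) (by fun_prop)
    fun _ ht => ⟨⟨hs, ht⟩, hy⟩

theorem exists_forall_le (hc : AssumptionA B Y c) (hB : IsCompact B) (hY : IsCompact Y)
    (u : ℝ) : ∃ T, 0 ≤ T ∧ ∀ s ∈ B, ∀ y ∈ Y, u ≤ c (s, T) y := by
  obtain ⟨T, hT, hle⟩ := (hB.prod hY).exists_uniform_le_of_monotoneOn
    (g := fun t p => c (p.1, t) p.2)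
    (fun t ht => hc.continuousOn.comp
      (f := fun p : EuclideanSpace ℝ (Fin n) × ETgt n => ((p.1, t), p.2))
      (by fun_prop) fun _ hp => ⟨⟨hp.1, ht⟩, hp.2⟩)
    (fun _ hp => (hc.strictMonoOn _ hp.1 _ hp.2).monotoneOn)
    (fun _ hp => hc.unbounded _ hp.1 _ hp.2) u
  exact ⟨T, hT, fun s hs y hy => hle (s, y) ⟨hs, hy⟩⟩

theorem exists_pos_add_le (hc : AssumptionA B Y c) (hB : IsCompact B) (hY : IsCompact Y)
    (T : ℝ) {δ : ℝ} (hδ : 0 < δ) :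
    ∃ m > 0, ∀ s ∈ B, ∀ y ∈ Y, ∀ t ∈ Icc 0 T, c (s, t) y + m ≤ c (s, t + δ) y := by
  have hshift : ContinuousOn (fun p : ESrc n × ETgt n => c (p.1.1, p.1.2 + δ) p.2)
      ((B ×ˢ Icc 0 T) ×ˢ Y) :=
    hc.continuousOn.comp (f := fun p : ESrc n × ETgt n => ((p.1.1, p.1.2 + δ), p.2))
      (by fun_prop) fun _ ⟨⟨hs, ht, _⟩, hy⟩ => ⟨⟨hs, add_nonneg ht hδ.le⟩, hy⟩
  obtain ⟨m, hm, hle⟩ := ((hB.prod isCompact_Icc).prod hY).exists_forall_le'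
    (hshift.sub (hc.continuousOn.mono fun p hp => ⟨⟨hp.1.1, hp.1.2.1⟩, hp.2⟩)) (a := 0)
    fun _ ⟨⟨hs, ht, _⟩, hy⟩ => sub_pos.2 <| hc.strictMonoOn _ hs _ hy ht
      (add_nonneg ht hδ.le) (lt_add_of_pos_right _ hδ)
  refine ⟨m, hm, fun s hs y hy t ht => ?_⟩
  have := hle ((s, t), y) ⟨⟨hs, ht⟩, hy⟩
  simp only [Pi.sub_apply] at this
  linarith

theorem equicontinuousOn_qfun (hc : AssumptionA B Y c) (hB : IsCompact B) (hY : IsCompact Y)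
    (u : ℝ) :
    EquicontinuousOn (fun y : ↥Y => fun x : EuclideanSpace ℝ (Fin n) × ℝ => qfun c x.1 y x.2)
      (B ×ˢ Iic u) := by
  obtain ⟨T, hT0, hT⟩ := hc.exists_forall_le hB hY u
  have hq : ∀ s ∈ B, ∀ y ∈ Y, ∀ σ ≤ u,
      qfun c s y σ ∈ Icc 0 T ∧ σ ≤ c (s, qfun c s y σ) y := fun s hs y hy σ hσ =>
    ⟨⟨le_max_left _ _, qfun_le hT0 (hσ.trans (hT s hs y hy))⟩,
      le_c_qfun (hc.continuousOn_height hs hy) hT0 (hσ.trans (hT s hs y hy))⟩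
  rintro ⟨s₀, σ₀⟩ ⟨hs₀, hσ₀⟩
  rw [Metric.uniformity_basis_dist.equicontinuousWithinAt_iff_right]
  intro ε hε
  obtain ⟨m, hm, hstep⟩ := hc.exists_pos_add_le hB hY T (half_pos hε)
  have hnear := Metric.uniformity_basis_dist.equicontinuousWithinAt_iff_right.mp
    (hc.equicontinuous s₀ hs₀) (m / 2) (half_pos hm)
  have hclose : ∀ᶠ σ in 𝓝[Iic u] σ₀, dist σ σ₀ < m / 2 :=
    mem_nhdsWithin_of_mem_nhds (Metric.ball_mem_nhds _ (half_pos hm))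
  rw [nhdsWithin_prod_eq]
  filter_upwards [hnear.prod_mk hclose, prod_mem_prod self_mem_nhdsWithin self_mem_nhdsWithin]
    with ⟨s, σ⟩ ⟨hcs, hdσ⟩ ⟨hs, hσ⟩ ⟨y, hy⟩
  dsimp only at hcs hdσ hs hσ
  rw [Real.dist_eq, abs_sub_lt_iff] at hdσ
  obtain ⟨⟨hq₀, hq₀T⟩, hc₀⟩ := hq s₀ hs₀ y hy σ₀ hσ₀
  obtain ⟨⟨hq₁, hq₁T⟩, hc₁⟩ := hq s hs y hy σ hσ
  have hδ₀ : 0 ≤ qfun c s₀ y σ₀ + ε / 2 := by positivity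
  have hδ₁ : 0 ≤ qfun c s y σ + ε / 2 := by positivity
  have h₁ : qfun c s y σ ≤ qfun c s₀ y σ₀ + ε / 2 :=
    qfun_le_add_of_dist_lt hδ₀ hc₀ (hstep _ hs₀ _ hy _ ⟨hq₀, hq₀T⟩) (by linarith [hdσ.1])
      (by rw [dist_comm]; exact hcs (⟨_, hδ₀⟩, ⟨y, hy⟩))
  have h₂ : qfun c s₀ y σ₀ ≤ qfun c s y σ + ε / 2 :=
    qfun_le_add_of_dist_lt hδ₁ hc₁ (hstep _ hs _ hy _ ⟨hq₁, hq₁T⟩) (by linarith [hdσ.2])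
      (hcs (⟨_, hδ₁⟩, ⟨y, hy⟩))
  change dist (qfun c s₀ y σ₀) (qfun c s y σ) < ε
  rw [Real.dist_eq, abs_sub_lt_iff]
  constructor <;> linarith

end AssumptionA

theorem qfun_uniformly_bounded_and_equicontinuous_general
    (n : ℕ)
    (B : Set (EuclideanSpace ℝ (Fin n))) (hBc : IsCompact B)
    (Y : Set (ETgt n)) (hYc : IsCompact Y)
    (c : ESrc n → ETgt n → ℝ) (hc : AssumptionA B Y c)
    (u₁ u₂ : ℝ) :
    (∃ M : ℝ, ∀ y ∈ Y, ∀ s ∈ B, ∀ σ ∈ Icc u₁ u₂, qfun c s y σ ≤ M) ∧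
    EquicontinuousOn
      (fun y : ↥Y => fun x : EuclideanSpace ℝ (Fin n) × ℝ => qfun c x.1 (y : ETgt n) x.2)
      (B ×ˢ Icc u₁ u₂) := by
  obtain ⟨T, hT0, hT⟩ := hc.exists_forall_le hBc hYc u₂
  exact ⟨⟨T, fun y hy s hs σ hσ => qfun_le hT0 (hσ.2.trans (hT s hs y hy))⟩,
    (hc.equicontinuousOn_qfun hBc hYc u₂).mono (prod_mono subset_rfl Icc_subset_Iic_self)⟩

/-- Under Assumption A, for any compact interval `U = [u₁,u₂] ⊂ ℝ`, the family
`{q(·,y,·)|_{B×U} : y ∈ Y}` is uniformly bounded and equicontinuous. -/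
theorem qfun_uniformly_bounded_and_equicontinuous
    (n : ℕ) (hn : 1 ≤ n)
    (B : Set (EuclideanSpace ℝ (Fin n))) (hBc : IsCompact B) (hBint : (interior B).Nonempty)
    (Y : Set (ETgt n)) (hYc : IsCompact Y) (hYne : Y.Nonempty)
    (c : ESrc n → ETgt n → ℝ) (hc : AssumptionA B Y c)
    (u₁ u₂ : ℝ) :
    (∃ M : ℝ, ∀ y ∈ Y, ∀ s ∈ B, ∀ σ ∈ Icc u₁ u₂, qfun c s y σ ≤ M) ∧
    EquicontinuousOn
      (fun y : ↥Y => fun x : EuclideanSpace ℝ (Fin n) × ℝ => qfun c x.1 (y : ETgt n) x.2)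
      (B ×ˢ Icc u₁ u₂) :=
  qfun_uniformly_bounded_and_equicontinuous_general n B hBc Y hYc c hc u₁ u₂
end
end

section
/- Let ε₀, ε₁ ∈ (0,1/2), X = [ε₀, 1−ε₁] × [0,∞), and Y ⊂ (0,∞)² compact and non-empty, and let c((s,p),(z,θ)) := (1/2)( z/(a√(1−s²)) − Ω a √(1−s²) )² + C_p θ ((p + p_min)/p_r)^κ, where κ = 2/7 and a, Ω, C_p, p_min, p_r are positive constants. Then c satisfies Assumption A: it is locally Lipschitz on X×Y; for every s ∈ [ε₀,1−ε₁] and (z,θ) ∈ Y the map p ↦ c((s,p),(z,θ)) is strictly increasing and unbounded on [0,∞); and, with z_max > 0 any constant such that Y ⊂ (0,z_max)×(0,∞), every function s ↦ c((s,p),(z,θ)) with p ∈ [0,∞) and (z,θ) ∈ Y is Lipschitz on [ε₀,1−ε₁] with Lipschitz constant L := z_max²/(a²ε₁²) + Ω²a², so the family {c((·,p),(z,θ)) : p ∈ [0,∞), (z,θ) ∈ Y} is equicontinuous. -/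
open Set Filter

/-! The kinetic term `½ (z/(a√(1-s²)) - Ω a √(1-s²))²` expands to the rational function
`z²/(2a²) / (1-s²) + Ω²a²/2 · (1-s²) - zΩ`. On `[ε₀, 1-ε₁]` we have `1 - s² ≥ ε₁`, so its
derivative is bounded by `z²/(a²ε₁²) + Ω²a²`, and the mean value theorem gives the Lipschitz
bound in `s` uniformly in `p` and `(z, θ)`, hence equicontinuity. The pressure term
`C_p θ ((p + p_min)/p_r)^{2/7}` is strictly increasing and tends to `∞` in `p`. Where
`1 - s² > 0` and `p + p_min > 0` the cost is `C¹`, hence locally Lipschitz. -/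

theorem LipschitzOnWith.congr {α β : Type*} [PseudoEMetricSpace α] [PseudoEMetricSpace β]
    {K : NNReal} {f g : α → β} {s : Set α} (hf : LipschitzOnWith K f s) (hfg : EqOn f g s) :
    LipschitzOnWith K g s := fun x hx y hy => by
  rw [← hfg hx, ← hfg hy]
  exact hf hx hy

theorem ContDiffAt.exists_lipschitzOnWith_inter_ball {E F : Type*} [NormedAddCommGroup E]
    [NormedSpace ℝ E] [NormedAddCommGroup F] [NormedSpace ℝ F] {f : E → F} {x : E}
    (hf : ContDiffAt ℝ 1 f x) (s : Set E) :
    ∃ ε > 0, ∃ K, LipschitzOnWith K f (s ∩ Metric.ball x ε) := by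
  obtain ⟨K, t, ht, hK⟩ := hf.exists_lipschitzOnWith
  obtain ⟨ε, hε, hball⟩ := Metric.mem_nhds_iff.1 ht
  exact ⟨ε, hε, K, hK.mono fun _ hy => hball hy.2⟩

theorem le_one_sub_sq_of_mem_Icc {ε s : ℝ} (hs : s ∈ Icc 0 (1 - ε)) (hε : 0 < ε) :
    ε ≤ 1 - s ^ 2 := by
  nlinarith [hs.1, hs.2]

theorem lipschitzOnWith_div_one_sub_sq_add_mul {ε α β : ℝ} (hε : 0 < ε) (hα : 0 ≤ α)
    (hβ : 0 ≤ β) (γ : ℝ) :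
    LipschitzOnWith (2 * α / ε ^ 2 + 2 * β).toNNReal
      (fun s => α / (1 - s ^ 2) + β * (1 - s ^ 2) + γ) (Icc 0 (1 - ε)) := by
  refine (convex_Icc 0 (1 - ε)).lipschitzOnWith_of_nnnorm_hasDerivWithin_le
    (f' := fun s => 2 * α * s / (1 - s ^ 2) ^ 2 - 2 * β * s) (fun s hs => ?_) fun s hs => ?_
  all_goals have hu : ε ≤ 1 - s ^ 2 := le_one_sub_sq_of_mem_Icc hs hε
  · have hdu : HasDerivAt (fun s : ℝ => 1 - s ^ 2) (-(2 * s)) s := by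
      simpa using (hasDerivAt_pow 2 s).const_sub 1
    have := ((hdu.inv (hε.trans_le hu).ne').const_mul α |>.add (hdu.const_mul β)).add_const γ
    convert this.hasDerivWithinAt using 1
    · ext; simp [div_eq_mul_inv]
    · field_simp
      ring
  · have hs1 : s ≤ 1 := by linarith [hs.2]
    have hfrac : 2 * α * s / (1 - s ^ 2) ^ 2 ≤ 2 * α / ε ^ 2 :=
      calc 2 * α * s / (1 - s ^ 2) ^ 2 ≤ 2 * α / (1 - s ^ 2) ^ 2 := by
            gcongr ?_ / _
            exact mul_le_of_le_one_right (by positivity) hs1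
        _ ≤ 2 * α / ε ^ 2 := by gcongr
    have hlin : 2 * β * s ≤ 2 * β := mul_le_of_le_one_right (by positivity) hs1
    have hfrac0 : 0 ≤ 2 * α * s / (1 - s ^ 2) ^ 2 := by have := hs.1; positivity
    have hlin0 : 0 ≤ 2 * β * s := by have := hs.1; positivity
    rw [← NNReal.coe_le_coe, coe_nnnorm, Real.norm_eq_abs]
    refine le_trans ?_ (Real.le_coe_toNNReal _)
    rw [abs_le]
    constructor <;> linarith

theorem half_mul_sq_div_sub_mul_sqrt {a Om z u : ℝ} (ha : a ≠ 0) (hu : 0 < u) :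
    (1 / 2) * (z / (a * Real.sqrt u) - Om * a * Real.sqrt u) ^ 2
      = z ^ 2 / (2 * a ^ 2) / u + Om ^ 2 * a ^ 2 / 2 * u - z * Om := by
  have hsq := Real.sq_sqrt hu.le
  have hpos := Real.sqrt_pos.2 hu
  field_simp
  rw [hsq]
  ring

noncomputable def mlmCost (a Om Cp pmin pr : ℝ) (x y : ℝ × ℝ) : ℝ :=
  (1 / 2) * (y.1 / (a * Real.sqrt (1 - x.1 ^ 2)) - Om * a * Real.sqrt (1 - x.1 ^ 2)) ^ 2
    + Cp * y.2 * ((x.2 + pmin) / pr) ^ ((2 : ℝ) / 7)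

section

variable {a Om Cp pmin pr : ℝ}

theorem contDiffAt_mlmCost {q : (ℝ × ℝ) × (ℝ × ℝ)} (ha : a ≠ 0) (hs : 0 < 1 - q.1.1 ^ 2)
    (hp : 0 < (q.1.2 + pmin) / pr) :
    ContDiffAt ℝ 1 (fun q : (ℝ × ℝ) × (ℝ × ℝ) => mlmCost a Om Cp pmin pr q.1 q.2) q := by
  unfold mlmCost
  have hsqrt : ContDiffAt ℝ 1 (fun q : (ℝ × ℝ) × (ℝ × ℝ) => Real.sqrt (1 - q.1.1 ^ 2)) q :=
    (Real.contDiffAt_sqrt hs.ne').comp q (by fun_prop)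
  have hrpow : ContDiffAt ℝ 1
      (fun q : (ℝ × ℝ) × (ℝ × ℝ) => ((q.1.2 + pmin) / pr) ^ ((2 : ℝ) / 7)) q :=
    (((contDiffAt_snd.comp q contDiffAt_fst).add contDiffAt_const).div_const pr).rpow_const_of_ne
      hp.ne'
  have hden : a * Real.sqrt (1 - q.1.1 ^ 2) ≠ 0 := by positivity
  have hkin : ContDiffAt ℝ 1 (fun q : (ℝ × ℝ) × (ℝ × ℝ) =>
      q.2.1 / (a * Real.sqrt (1 - q.1.1 ^ 2)) - Om * a * Real.sqrt (1 - q.1.1 ^ 2)) q :=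
    ((contDiffAt_fst.comp q contDiffAt_snd).div (contDiffAt_const.mul hsqrt) hden).sub
      (contDiffAt_const.mul hsqrt)
  exact (contDiffAt_const.mul (hkin.pow 2)).add
    ((contDiffAt_const.mul (contDiffAt_snd.comp q contDiffAt_snd)).mul hrpow)

theorem lipschitzOnWith_mlmCost_sinLat {ε₀ ε₁ zmax : ℝ} (hε₀ : 0 ≤ ε₀) (hε₁ : 0 < ε₁)
    (ha : a ≠ 0) (p : ℝ) {y : ℝ × ℝ} (hy : y.1 ^ 2 ≤ zmax ^ 2) :
    LipschitzOnWith (zmax ^ 2 / (a ^ 2 * ε₁ ^ 2) + Om ^ 2 * a ^ 2).toNNReal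
      (fun s => mlmCost a Om Cp pmin pr (s, p) y) (Icc ε₀ (1 - ε₁)) := by
  have hlip := lipschitzOnWith_div_one_sub_sq_add_mul hε₁ (α := y.1 ^ 2 / (2 * a ^ 2))
    (β := Om ^ 2 * a ^ 2 / 2) (by positivity) (by positivity)
    (Cp * y.2 * ((p + pmin) / pr) ^ ((2 : ℝ) / 7) - y.1 * Om)
  refine ((hlip.mono (Icc_subset_Icc_left hε₀)).congr fun s hs => ?_).weaken ?_
  · have hu : ε₁ ≤ 1 - s ^ 2 := le_one_sub_sq_of_mem_Icc ⟨hε₀.trans hs.1, hs.2⟩ hε₁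
    rw [mlmCost, half_mul_sq_div_sub_mul_sqrt ha (hε₁.trans_le hu)]
    ring
  · apply Real.toNNReal_le_toNNReal
    calc 2 * (y.1 ^ 2 / (2 * a ^ 2)) / ε₁ ^ 2 + 2 * (Om ^ 2 * a ^ 2 / 2)
        = y.1 ^ 2 / (a ^ 2 * ε₁ ^ 2) + Om ^ 2 * a ^ 2 := by field_simp
      _ ≤ zmax ^ 2 / (a ^ 2 * ε₁ ^ 2) + Om ^ 2 * a ^ 2 := by gcongr

theorem strictMonoOn_mlmCost_pressure (hCp : 0 < Cp) (hpmin : 0 ≤ pmin) (hpr : 0 < pr)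
    (s : ℝ) {y : ℝ × ℝ} (hy : 0 < y.2) :
    StrictMonoOn (fun p => mlmCost a Om Cp pmin pr (s, p) y) (Ici 0) := by
  intro p₁ hp₁ p₂ hp₂ hp
  have : 0 ≤ (p₁ + pmin) / pr := by have := hp₁.out; positivity
  simp only [mlmCost]
  gcongr

theorem tendsto_mlmCost_pressure_atTop (hCp : 0 < Cp) (hpr : 0 < pr) (s : ℝ) {y : ℝ × ℝ}
    (hy : 0 < y.2) :
    Tendsto (fun p => mlmCost a Om Cp pmin pr (s, p) y) atTop atTop := by
  simp only [mlmCost]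
  exact tendsto_atTop_add_const_left _ _ <| Tendsto.const_mul_atTop (mul_pos hCp hy) <|
    (tendsto_rpow_atTop (y := 2 / 7) (by norm_num)).comp <|
      (tendsto_atTop_add_const_right _ pmin tendsto_id).atTop_div_const hpr

end

theorem mlm_cost_satisfies_assumptionA_general
    (ε₀ ε₁ : ℝ) (hε₀ : ε₀ ∈ Ioo (0:ℝ) (1/2)) (hε₁ : ε₁ ∈ Ioo (0:ℝ) (1/2))
    (Y : Set (ℝ × ℝ))
    (a Om Cp pmin pr : ℝ)
    (ha : 0 < a) (hCp : 0 < Cp) (hpmin : 0 < pmin) (hpr : 0 < pr)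
    (zmax : ℝ) (hYz : Y ⊆ Ioo (0:ℝ) zmax ×ˢ Ioi (0:ℝ))
    (c : (ℝ × ℝ) → (ℝ × ℝ) → ℝ)
    (hcdef : c = fun x y =>
      (1/2) * (y.1 / (a * Real.sqrt (1 - x.1^2)) - Om * a * Real.sqrt (1 - x.1^2))^2
        + Cp * y.2 * ((x.2 + pmin) / pr) ^ ((2:ℝ)/7)) :
    (∀ z ∈ ((Icc ε₀ (1 - ε₁)) ×ˢ Ici (0:ℝ)) ×ˢ Y, ∃ ε > 0, ∃ K : NNReal,
      LipschitzOnWith K (fun q : (ℝ × ℝ) × (ℝ × ℝ) => c q.1 q.2)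
        ((((Icc ε₀ (1 - ε₁)) ×ˢ Ici (0:ℝ)) ×ˢ Y) ∩ Metric.ball z ε)) ∧
    (∀ s ∈ Icc ε₀ (1 - ε₁), ∀ y ∈ Y,
      StrictMonoOn (fun t : ℝ => c (s, t) y) (Ici (0:ℝ)) ∧
      ∀ M : ℝ, ∃ t : ℝ, 0 ≤ t ∧ M ≤ c (s, t) y) ∧
    (∀ p ∈ Ici (0:ℝ), ∀ y ∈ Y,
      LipschitzOnWith (Real.toNNReal (zmax^2 / (a^2 * ε₁^2) + Om^2 * a^2))
        (fun s : ℝ => c (s, p) y) (Icc ε₀ (1 - ε₁))) ∧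
    EquicontinuousOn
      (fun i : ↥(Ici (0:ℝ)) × ↥Y => fun s : ℝ => c (s, (i.1 : ℝ)) (i.2 : ℝ × ℝ))
      (Icc ε₀ (1 - ε₁)) := by
  obtain rfl : c = mlmCost a Om Cp pmin pr := hcdef
  obtain ⟨hε₀, -⟩ := hε₀
  obtain ⟨hε₁, -⟩ := hε₁
  have hlip : ∀ p ∈ Ici (0:ℝ), ∀ y ∈ Y,
      LipschitzOnWith (zmax ^ 2 / (a ^ 2 * ε₁ ^ 2) + Om ^ 2 * a ^ 2).toNNReal
        (fun s => mlmCost a Om Cp pmin pr (s, p) y) (Icc ε₀ (1 - ε₁)) := fun p _ y hy =>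
    lipschitzOnWith_mlmCost_sinLat hε₀.le hε₁ ha.ne' p
      (pow_le_pow_left₀ (hYz hy).1.1.le (hYz hy).1.2.le 2)
  refine ⟨fun q hq => ?_, fun s _ y hy => ?_, hlip, ?_⟩
  · obtain ⟨⟨⟨hs₀, hs₁⟩, hp⟩, -⟩ := hq
    have hp : 0 < (q.1.2 + pmin) / pr := by have := hp.out; positivity
    exact (contDiffAt_mlmCost ha.ne' (by nlinarith) hp).exists_lipschitzOnWith_inter_ball _
  · have hθ : 0 < y.2 := (hYz hy).2
    refine ⟨strictMonoOn_mlmCost_pressure hCp hpmin.le hpr s hθ, fun M => ?_⟩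
    obtain ⟨t, hMt, ht⟩ := (((tendsto_mlmCost_pressure_atTop hCp hpr s hθ).eventually_ge_atTop
      M).and (eventually_ge_atTop 0)).exists
    exact ⟨t, ht, hMt⟩
  · exact (LipschitzOnWith.uniformEquicontinuousOn _ _
      fun i : ↥(Ici (0:ℝ)) × ↥Y => hlip _ i.1.2 _ i.2.2).equicontinuousOn

/-- The Modified-Lagrangian-Mean energy-density cost function
`c((s,p),(z,θ)) = ½ (z/(a√(1−s²)) − Ωa√(1−s²))² + C_p θ ((p+p_min)/p_r)^{2/7}`
satisfies Assumption A on `X × Y`, where `X = [ε₀, 1−ε₁] × [0,∞)` and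
`Y ⊂ (0,∞)²` is compact and non-empty: it is locally Lipschitz; for each fixed `(s,(z,θ))`
it is strictly increasing and unbounded in `p`; and each function `s ↦ c((s,p),(z,θ))` is
Lipschitz on `[ε₀,1−ε₁]` with the uniform constant `L = z_max²/(a²ε₁²) + Ω²a²`, whence the
family is equicontinuous. -/
theorem mlm_cost_satisfies_assumptionA
    (ε₀ ε₁ : ℝ) (hε₀ : ε₀ ∈ Ioo (0:ℝ) (1/2)) (hε₁ : ε₁ ∈ Ioo (0:ℝ) (1/2))
    (Y : Set (ℝ × ℝ)) (hYc : IsCompact Y) (hYne : Y.Nonempty)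
    (hYpos : Y ⊆ Ioi (0:ℝ) ×ˢ Ioi (0:ℝ))
    (a Om Cp pmin pr : ℝ)
    (ha : 0 < a) (hOm : 0 < Om) (hCp : 0 < Cp) (hpmin : 0 < pmin) (hpr : 0 < pr)
    (zmax : ℝ) (hzmax : 0 < zmax) (hYz : Y ⊆ Ioo (0:ℝ) zmax ×ˢ Ioi (0:ℝ))
    (c : (ℝ × ℝ) → (ℝ × ℝ) → ℝ)
    (hcdef : c = fun x y =>
      (1/2) * (y.1 / (a * Real.sqrt (1 - x.1^2)) - Om * a * Real.sqrt (1 - x.1^2))^2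
        + Cp * y.2 * ((x.2 + pmin) / pr) ^ ((2:ℝ)/7)) :
    (∀ z ∈ ((Icc ε₀ (1 - ε₁)) ×ˢ Ici (0:ℝ)) ×ˢ Y, ∃ ε > 0, ∃ K : NNReal,
      LipschitzOnWith K (fun q : (ℝ × ℝ) × (ℝ × ℝ) => c q.1 q.2)
        ((((Icc ε₀ (1 - ε₁)) ×ˢ Ici (0:ℝ)) ×ˢ Y) ∩ Metric.ball z ε)) ∧
    (∀ s ∈ Icc ε₀ (1 - ε₁), ∀ y ∈ Y,
      StrictMonoOn (fun t : ℝ => c (s, t) y) (Ici (0:ℝ)) ∧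
      ∀ M : ℝ, ∃ t : ℝ, 0 ≤ t ∧ M ≤ c (s, t) y) ∧
    (∀ p ∈ Ici (0:ℝ), ∀ y ∈ Y,
      LipschitzOnWith (Real.toNNReal (zmax^2 / (a^2 * ε₁^2) + Om^2 * a^2))
        (fun s : ℝ => c (s, p) y) (Icc ε₀ (1 - ε₁))) ∧
    EquicontinuousOn
      (fun i : ↥(Ici (0:ℝ)) × ↥Y => fun s : ℝ => c (s, (i.1 : ℝ)) (i.2 : ℝ × ℝ))
      (Icc ε₀ (1 - ε₁)) :=
  mlm_cost_satisfies_assumptionA_general ε₀ ε₁ hε₀ hε₁ Y a Om Cp pmin pr ha hCp hpmin hpr zmax hYz c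
    hcdef
end
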